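/- If G is a group generated by a set S such that every element of G is a product of at most N elements of S, and every element of S is a commutator in G, then every homogeneous quasimorphism on G is identically zero. -/

import Mathlib

/-!
A homogeneous quasimorphism `φ` is conjugation invariant: `φ(g x g⁻¹) - φ x` is bounded by
`2B`, and by homogeneity `n` times it is `φ(g xⁿ g⁻¹) - φ(xⁿ)`, hence it is `0`. Consequently
`φ [a, b]` lies within `B` of `φ(a b a⁻¹) + φ(b⁻¹) = 0`, so `φ` is bounded on `S`, and on all of `G` because every
element is a product of at most `N` elements of `S`. A homogeneous function bounded on all
powers `gⁿ` vanishes at `g`.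
-/

section Quasimorphism

variable {G : Type*} [Group G] {φ : G → ℝ} {B : ℝ}

def IsQuasimorphism (φ : G → ℝ) (B : ℝ) : Prop :=
  ∀ x y : G, |φ (x * y) - φ x - φ y| ≤ B

def IsHomogeneous (φ : G → ℝ) : Prop :=
  ∀ (g : G) (n : ℤ), φ (g ^ n) = n * φ g

lemma eq_zero_of_forall_nat_mul_abs_le {c C : ℝ} (h : ∀ n : ℕ, n * |c| ≤ C) : c = 0 := by
  by_contra hc
  obtain ⟨n, hn⟩ := exists_nat_gt (C / |c|)
  have := h n
  rw [div_lt_iff₀ (abs_pos.mpr hc)] at hn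
  linarith

namespace IsHomogeneous

lemma map_one (hφ : IsHomogeneous φ) : φ 1 = 0 := by
  simpa using hφ 1 0

lemma map_inv (hφ : IsHomogeneous φ) (g : G) : φ g⁻¹ = -φ g := by
  simpa using hφ g (-1)

lemma map_pow (hφ : IsHomogeneous φ) (g : G) (n : ℕ) : φ (g ^ n) = n * φ g := by
  simpa using hφ g n

lemma eq_zero_of_forall_abs_map_pow_le (hφ : IsHomogeneous φ) {g : G} {C : ℝ}
    (h : ∀ n : ℕ, |φ (g ^ n)| ≤ C) : φ g = 0 :=
  eq_zero_of_forall_nat_mul_abs_le fun n => by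
    simpa [hφ.map_pow, abs_mul] using h n

end IsHomogeneous

namespace IsQuasimorphism

lemma nonneg (hq : IsQuasimorphism φ B) : 0 ≤ B :=
  (abs_nonneg _).trans (hq 1 1)

lemma abs_map_mul_le (hq : IsQuasimorphism φ B) (x y : G) :
    |φ (x * y)| ≤ |φ x| + |φ y| + B := by
  have := hq x y
  rw [abs_le] at this ⊢
  constructor <;> linarith [neg_abs_le (φ x), neg_abs_le (φ y), le_abs_self (φ x),
    le_abs_self (φ y)]

lemma abs_map_list_prod_le (hq : IsQuasimorphism φ B) {C : ℝ} (l : List G)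
    (hl : ∀ s ∈ l, |φ s| ≤ C) : |φ l.prod| ≤ |φ 1| + l.length * (C + B) := by
  induction l with
  | nil => simp
  | cons a t ih =>
    have ha := hl a List.mem_cons_self
    have ht := ih fun s hs => hl s (List.mem_cons_of_mem a hs)
    have := hq.abs_map_mul_le a t.prod
    simp only [List.prod_cons, List.length_cons, Nat.cast_succ]
    linarith

lemma abs_map_conj_sub_le (hq : IsQuasimorphism φ B) (hφ : IsHomogeneous φ) (g x : G) :
    |φ (g * x * g⁻¹) - φ x| ≤ 2 * B := by
  have h₁ := hq (g * x) g⁻¹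
  have h₂ := hq g x
  rw [hφ.map_inv] at h₁
  rw [abs_le] at h₁ h₂ ⊢
  constructor <;> linarith

lemma map_conj (hq : IsQuasimorphism φ B) (hφ : IsHomogeneous φ) (g x : G) :
    φ (g * x * g⁻¹) = φ x := by
  have : φ (g * x * g⁻¹) - φ x = 0 :=
    eq_zero_of_forall_nat_mul_abs_le (C := 2 * B) fun n => by
      have := hq.abs_map_conj_sub_le hφ g (x ^ n)
      rwa [← conj_pow, hφ.map_pow, hφ.map_pow, ← mul_sub, abs_mul, Nat.abs_cast] at this
  linarith

lemma abs_map_commutator_le (hq : IsQuasimorphism φ B) (hφ : IsHomogeneous φ) (a b : G) :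
    |φ (a * b * a⁻¹ * b⁻¹)| ≤ B := by
  simpa [hq.map_conj hφ, hφ.map_inv] using hq (a * b * a⁻¹) b⁻¹

end IsQuasimorphism

end Quasimorphism

theorem stmt_19 {G : Type*} [Group G] (S : Set G) (N : ℕ)
    (hgen : ∀ g : G, ∃ l : List G, l.length ≤ N ∧ (∀ s ∈ l, s ∈ S) ∧ l.prod = g)
    (hcomm : ∀ s ∈ S, ∃ a b : G, s = a * b * a⁻¹ * b⁻¹)
    (φ : G → ℝ) (B : ℝ)
    (hq : ∀ x y : G, |φ (x * y) - φ x - φ y| ≤ B)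
    (hhom : ∀ (g : G) (n : ℤ), φ (g ^ n) = n * φ g) :
    ∀ g : G, φ g = 0 := by
  have hq : IsQuasimorphism φ B := hq
  have hφ : IsHomogeneous φ := hhom
  have hS : ∀ s ∈ S, |φ s| ≤ B := by
    intro s hs
    obtain ⟨a, b, rfl⟩ := hcomm s hs
    exact hq.abs_map_commutator_le hφ a b
  have hbounded : ∀ g : G, |φ g| ≤ N * (B + B) := by
    intro g
    obtain ⟨l, hlen, hlS, rfl⟩ := hgen g
    calc |φ l.prod| ≤ |φ 1| + l.length * (B + B) :=
          hq.abs_map_list_prod_le l fun s hs => hS s (hlS s hs)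
      _ ≤ N * (B + B) := by
          rw [hφ.map_one, abs_zero, zero_add]
          gcongr
          linarith [hq.nonneg]
  exact fun g => hφ.eq_zero_of_forall_abs_map_pow_le fun n => hbounded (g ^ n)
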